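/- arXiv:1404.2969 — 6 statements merged into one kernel-verified Lean document; each statement's English description precedes it below -/
import Mathlib

section
/- Let f : ℝ → ℝ be C³ with f(0) = f'(0) = 0 and f''(0) > 0. For small h > 0 let s(h) < 0 < t(h) solve f(x) = h near 0 and let S(h) = ∫_{s(h)}^{t(h)} (h - f(x)) dx be the area between the chord y = h and the curve. Then S(h)/(h^{3/2}) → (4√2)/(3√(f''(0))) as h → 0⁺. -/
/-!
Near `0` the second derivative stays in `[2a, 2b]` for any `0 < a < f''(0)/2 < b`, so
`a x² ≤ f x ≤ b x²` there and `f` is convex. Hence the region under the chord at height `h`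
contains the parabolic cap of `b x²` and lies inside the cap of `a x²`, and by Archimedes a cap of
`c x²` at height `h` has area `(4/3) h √(h/c)`. Letting `a, b → f''(0)/2` gives the limit.
-/

open Real Filter Set MeasureTheory Topology

theorem convexOn_sub_mul_sq {f : ℝ → ℝ} (hf : ContDiff ℝ 2 f) {D : Set ℝ} (hD : Convex ℝ D)
    {a : ℝ} (ha : ∀ x ∈ D, 2 * a ≤ deriv (deriv f) x) :
    ConvexOn ℝ D (fun x => f x - a * x ^ 2) := by
  have hd := hf.differentiable two_ne_zero
  have hd' := hf.differentiable_deriv_two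
  have hderiv : deriv (fun x => f x - a * x ^ 2) = fun x => deriv f x - 2 * a * x := by
    funext x
    exact ((hd x).hasDerivAt.sub ((hasDerivAt_pow 2 x).const_mul a)).deriv.trans (by ring)
  refine convexOn_of_deriv2_nonneg' hD (by fun_prop) ?_ fun x hx => ?_
  · rw [hderiv]; fun_prop
  · have : deriv (deriv (fun x => f x - a * x ^ 2)) x = deriv (deriv f) x - 2 * a := by
      rw [hderiv]
      exact ((hd' x).hasDerivAt.sub ((hasDerivAt_id x).const_mul (2 * a))).deriv.trans (by ring)
    simpa [this] using ha x hx

theorem mul_sq_le_of_le_deriv_deriv {f : ℝ → ℝ} (hf : ContDiff ℝ 2 f) (h0 : f 0 = 0)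
    (h1 : deriv f 0 = 0) {D : Set ℝ} (hD : Convex ℝ D) (hD0 : D ∈ 𝓝 0) {a : ℝ}
    (ha : ∀ x ∈ D, 2 * a ≤ deriv (deriv f) x) {x : ℝ} (hx : x ∈ D) : a * x ^ 2 ≤ f x := by
  have hderiv : HasDerivAt (fun x => f x - a * x ^ 2) 0 0 := by
    simpa [h1] using
      ((hf.differentiable two_ne_zero 0).hasDerivAt.fun_sub
        ((hasDerivAt_pow 2 (0 : ℝ)).const_mul a))
  have hmin := (convexOn_sub_mul_sq hf hD ha).isMinOn_of_rightDeriv_eq_zero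
    (mem_interior_iff_mem_nhds.2 hD0)
    (hderiv.hasDerivWithinAt.derivWithin (uniqueDiffWithinAt_Ioi 0))
  simpa [h0] using hmin hx

theorem le_mul_sq_of_deriv_deriv_le {f : ℝ → ℝ} (hf : ContDiff ℝ 2 f) (h0 : f 0 = 0)
    (h1 : deriv f 0 = 0) {D : Set ℝ} (hD : Convex ℝ D) (hD0 : D ∈ 𝓝 0) {b : ℝ}
    (hb : ∀ x ∈ D, deriv (deriv f) x ≤ 2 * b) {x : ℝ} (hx : x ∈ D) : f x ≤ b * x ^ 2 := by
  have := mul_sq_le_of_le_deriv_deriv (f := fun x => -f x) hf.neg (by simp [h0])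
    (by simp [h1]) hD hD0 (a := -b)
    (fun x hx => by simp only [deriv.fun_neg']; linarith [hb x hx]) hx
  linarith

theorem integral_sub_le_integral_sub {f g : ℝ → ℝ} (hf : Continuous f) (hg : Continuous g)
    {h s t u v : ℝ} (hsu : s ≤ u) (huv : u ≤ v) (hvt : v ≤ t)
    (hgf : ∀ x ∈ Icc u v, g x ≤ f x) (hgh : ∀ x ∈ Icc s t, g x ≤ h) :
    ∫ x in u..v, (h - f x) ≤ ∫ x in s..t, (h - g x) :=
  calc ∫ x in u..v, (h - f x)
      ≤ ∫ x in u..v, (h - g x) :=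
        intervalIntegral.integral_mono_on huv ((continuous_const.sub hf).intervalIntegrable _ _)
          ((continuous_const.sub hg).intervalIntegrable _ _) fun x hx => by linarith [hgf x hx]
    _ ≤ ∫ x in s..t, (h - g x) :=
        intervalIntegral.integral_mono_interval hsu huv hvt
          ((ae_restrict_iff' measurableSet_Ioc).2 <| .of_forall fun x hx =>
            sub_nonneg.2 (hgh x (Ioc_subset_Icc_self hx)))
          ((continuous_const.sub hg).intervalIntegrable _ _)

theorem integral_parabola_cap {a h : ℝ} (ha : 0 < a) (hh : 0 ≤ h) :
    ∫ x in -√(h / a)..√(h / a), (h - a * x ^ 2) = 4 / 3 * h * √(h / a) := by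
  have hw : a * √(h / a) ^ 2 = h := by
    rw [sq_sqrt (div_nonneg hh ha.le)]; field_simp
  rw [intervalIntegral.integral_sub intervalIntegrable_const
    ((by fun_prop : Continuous fun x : ℝ => a * x ^ 2).intervalIntegrable _ _),
    intervalIntegral.integral_const, intervalIntegral.integral_const_mul, integral_pow, smul_eq_mul]
  linear_combination (-2 / 3 * √(h / a)) * hw

theorem integral_sub_le_parabola_cap {f : ℝ → ℝ} (hf : Continuous f) {a h s t : ℝ} (ha : 0 < a)
    (hst : s ≤ t) (hfa : ∀ x ∈ Icc s t, a * x ^ 2 ≤ f x) (hfs : f s = h) (hft : f t = h) :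
    ∫ x in s..t, (h - f x) ≤ 4 / 3 * h * √(h / a) := by
  set w := √(h / a)
  have hw : ∀ x, a * x ^ 2 ≤ h → |x| ≤ w := fun x hx => abs_le_sqrt ((le_div_iff₀' ha).2 hx)
  have hs := abs_le.1 (hw s (hfs ▸ hfa s ⟨le_rfl, hst⟩))
  have ht := abs_le.1 (hw t (hft ▸ hfa t ⟨hst, le_rfl⟩))
  have hh : 0 ≤ h := hfs ▸ (mul_nonneg ha.le (sq_nonneg s)).trans (hfa s ⟨le_rfl, hst⟩)
  have hparabola : ∀ x ∈ Icc (-w) w, a * x ^ 2 ≤ h := fun x hx => by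
    have : a * w ^ 2 = h := by rw [sq_sqrt (div_nonneg hh ha.le)]; field_simp
    nlinarith [sq_le_sq' hx.1 hx.2]
  calc ∫ x in s..t, (h - f x)
      ≤ ∫ x in -w..w, (h - a * x ^ 2) :=
        integral_sub_le_integral_sub hf (by fun_prop) hs.1 hst ht.2 hfa hparabola
    _ = 4 / 3 * h * w := integral_parabola_cap ha hh

theorem parabola_cap_le_integral_sub {f : ℝ → ℝ} (hf : Continuous f) {b h s t : ℝ} (hb : 0 < b)
    (hh : 0 ≤ h) (hs : s ≤ 0) (ht : 0 ≤ t) (hfb : ∀ x ∈ Icc s t, f x ≤ b * x ^ 2)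
    (hfh : ∀ x ∈ Icc s t, f x ≤ h) (hfs : f s = h) (hft : f t = h) :
    4 / 3 * h * √(h / b) ≤ ∫ x in s..t, (h - f x) := by
  set w := √(h / b)
  have hw : ∀ x, h ≤ b * x ^ 2 → w ≤ |x| := fun x hx =>
    sqrt_sq_eq_abs x ▸ sqrt_le_sqrt ((div_le_iff₀' hb).2 hx)
  have hsw : s ≤ -w := by
    have := hw s (hfs ▸ hfb s ⟨le_rfl, hs.trans ht⟩); rw [abs_of_nonpos hs] at this; linarith
  have htw : w ≤ t := abs_of_nonneg ht ▸ hw t (hft ▸ hfb t ⟨hs.trans ht, le_rfl⟩)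
  calc 4 / 3 * h * w
      = ∫ x in -w..w, (h - b * x ^ 2) := (integral_parabola_cap hb hh).symm
    _ ≤ ∫ x in s..t, (h - f x) :=
        integral_sub_le_integral_sub (by fun_prop) hf hsw (by linarith [sqrt_nonneg (h / b)]) htw
          (fun x hx => hfb x ⟨hsw.trans hx.1, hx.2.trans htw⟩) hfh

theorem tendsto_of_eventually_mem_Icc {α β γ : Type*} [TopologicalSpace γ] [LinearOrder γ]
    [OrderTopology γ] {l : Filter α} {l' : Filter β} [l'.NeBot] {g : α → γ} {lo hi : β → γ}
    {c : γ} (hlo : Tendsto lo l' (𝓝 c)) (hhi : Tendsto hi l' (𝓝 c))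
    (H : ∀ᶠ δ in l', ∀ᶠ x in l, g x ∈ Icc (lo δ) (hi δ)) : Tendsto g l (𝓝 c) := by
  refine tendsto_order.2 ⟨fun d hd => ?_, fun d hd => ?_⟩
  · obtain ⟨δ, hδ, hg⟩ := ((hlo.eventually (eventually_gt_nhds hd)).and H).exists
    exact hg.mono fun x hx => hδ.trans_le hx.1
  · obtain ⟨δ, hδ, hg⟩ := ((hhi.eventually (eventually_lt_nhds hd)).and H).exists
    exact hg.mono fun x hx => hx.2.trans_lt hδ

theorem eventually_area_div_mem_Icc {f : ℝ → ℝ} (hf : ContDiff ℝ 2 f) (h0 : f 0 = 0)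
    (h1 : deriv f 0 = 0) {ε : ℝ} (hε : 0 < ε) {s t : ℝ → ℝ}
    (hst : ∀ h ∈ Ioo 0 ε, s h < 0 ∧ 0 < t h ∧ f (s h) = h ∧ f (t h) = h)
    (hs0 : Tendsto s (𝓝[>] 0) (𝓝 0)) (ht0 : Tendsto t (𝓝[>] 0) (𝓝 0))
    {a b : ℝ} (ha : 0 < a) (hak : 2 * a < deriv (deriv f) 0) (hbk : deriv (deriv f) 0 < 2 * b) :
    ∀ᶠ h in 𝓝[>] 0,
      (∫ x in (s h)..(t h), (h - f x)) / (h * √h) ∈ Icc (4 / (3 * √b)) (4 / (3 * √a)) := by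
  have hf'' : Continuous (deriv (deriv f)) := (hf.deriv' (n := 1)).continuous_deriv le_rfl
  obtain ⟨r, hr, hD⟩ := Metric.nhds_basis_closedBall.eventually_iff.1 <|
    hf''.continuousAt.eventually_mem (Icc_mem_nhds hak hbk)
  set D := Metric.closedBall (0 : ℝ) r
  have hDc : Convex ℝ D := convex_closedBall 0 r
  have hD0 : D ∈ 𝓝 0 := Metric.closedBall_mem_nhds 0 hr
  have hfa : ∀ x ∈ D, a * x ^ 2 ≤ f x := fun x =>
    mul_sq_le_of_le_deriv_deriv hf h0 h1 hDc hD0 fun y hy => (hD hy).1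
  have hfb : ∀ x ∈ D, f x ≤ b * x ^ 2 := fun x =>
    le_mul_sq_of_deriv_deriv_le hf h0 h1 hDc hD0 fun y hy => (hD hy).2
  have hconv : ConvexOn ℝ D f := by
    simpa using convexOn_sub_mul_sq hf hDc (a := 0) fun x hx => by linarith [(hD hx).1]
  filter_upwards [Ioo_mem_nhdsGT hε, hs0 hD0, ht0 hD0] with h hh hsD htD
  obtain ⟨hs, ht, hfs, hft⟩ := hst h hh
  have hsub : Icc (s h) (t h) ⊆ D := hDc.ordConnected.out hsD htD
  have hfh : ∀ x ∈ Icc (s h) (t h), f x ≤ h := fun x hx => by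
    simpa [hfs, hft] using
      hconv.le_on_segment hsD htD ((segment_eq_Icc (hs.trans ht).le).symm ▸ hx)
  have hcap : ∀ c > 0, 4 / 3 * h * √(h / c) = 4 / (3 * √c) * (h * √h) := fun c hc => by
    rw [sqrt_div' h hc.le]; field_simp
  have hpos : 0 < h * √h := mul_pos hh.1 (sqrt_pos.2 hh.1)
  constructor
  · rw [le_div_iff₀ hpos, ← hcap b (by linarith)]
    exact parabola_cap_le_integral_sub hf.continuous (by linarith) hh.1.le hs.le ht.le
      (fun x hx => hfb x (hsub hx)) hfh hfs hft
  · rw [div_le_iff₀ hpos, ← hcap a ha]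
    exact integral_sub_le_parabola_cap hf.continuous ha (hs.trans ht).le
      (fun x hx => hfa x (hsub hx)) hfs hft

theorem stmt2 (f : ℝ → ℝ) (hf : ContDiff ℝ 3 f)
    (h0 : f 0 = 0) (h1 : deriv f 0 = 0) (h2 : 0 < deriv (deriv f) 0)
    (ε : ℝ) (hε : 0 < ε) (s t : ℝ → ℝ)
    (hst : ∀ h ∈ Ioo 0 ε, s h < 0 ∧ 0 < t h ∧ f (s h) = h ∧ f (t h) = h)
    (hs0 : Tendsto s (nhdsWithin 0 (Ioi 0)) (nhds 0))
    (ht0 : Tendsto t (nhdsWithin 0 (Ioi 0)) (nhds 0)) :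
    Tendsto (fun h => (∫ x in (s h)..(t h), (h - f x)) / (h * Real.sqrt h))
      (nhdsWithin 0 (Ioi 0))
      (nhds (4 * Real.sqrt 2 / (3 * Real.sqrt (deriv (deriv f) 0)))) := by
  set k := deriv (deriv f) 0
  have hφ : ContinuousAt (fun c => 4 / (3 * √c)) (k / 2) :=
    continuousAt_const.div (continuous_sqrt.continuousAt.const_mul 3) (by positivity)
  have hlimit : 4 * √2 / (3 * √k) = 4 / (3 * √(k / 2)) := by
    rw [sqrt_div' k zero_le_two]; field_simp
  rw [hlimit]
  refine tendsto_of_eventually_mem_Icc (l' := 𝓝[>] 0)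
    (hφ.tendsto.comp (tendsto_nhdsWithin_of_tendsto_nhds <|
      (continuous_const_add (k / 2)).tendsto' 0 _ (add_zero _)))
    (hφ.tendsto.comp (tendsto_nhdsWithin_of_tendsto_nhds <|
      (continuous_sub_left (k / 2)).tendsto' 0 _ (sub_zero _))) ?_
  filter_upwards [Ioo_mem_nhdsGT (half_pos h2)] with δ hδ
  exact eventually_area_div_mem_Icc (hf.of_le (by norm_num)) h0 h1 hε hst hs0 ht0
    (a := k / 2 - δ) (b := k / 2 + δ) (by linarith [hδ.2]) (by linarith [hδ.1])
    (by linarith [hδ.1])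
end

section
/- Let f : ℝ → ℝ be C³ with f(0) = f'(0) = 0 and f''(0) > 0. For small h > 0 let s(h) < 0 < t(h) solve f(x) = h near 0. Define ℓ(h) = (t - s) + h·(f'(t) - f'(s))/(f'(s)·f'(t)), the length of the segment cut on the x-axis (the tangent at the origin) by the tangent lines to the graph at (s, h) and (t, h). Then ℓ(h)/√h → √2/√(f''(0)) as h → 0⁺. -/
/-! Writing `a = f''(0)`, L'Hôpital gives `f x ~ a x² / 2` and `f' x ~ a x`, so the two roots of
`f = h` behave like `t ~ c √h`, `s ~ -c √h` with `c = √(2 / a)`, and `f'(t) ~ a c √h`,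
`f'(s) ~ -a c √h`. Dividing `ℓ(h)` by `√h` then gives the limit `2c - 2 / (a c) = c`, since
`a c² = 2`. -/

open Real Filter Set Topology

section LevelSetAsymptotics

variable {α : Type*} {l : Filter α}

theorem tendsto_div_self_of_hasDerivAt_zero {g : ℝ → ℝ} {a : ℝ} (hg : HasDerivAt g a 0)
    (hg0 : g 0 = 0) : Tendsto (fun x => g x / x) (𝓝[≠] 0) (𝓝 a) :=
  hg.tendsto_slope.congr fun x => by simp [slope, hg0, div_eq_inv_mul]

theorem tendsto_div_sq_of_hasDerivAt_deriv {f : ℝ → ℝ} {a : ℝ} (hf : Differentiable ℝ f)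
    (h0 : f 0 = 0) (h1 : deriv f 0 = 0) (h2 : HasDerivAt (deriv f) a 0) :
    Tendsto (fun x => f x / x ^ 2) (𝓝[≠] 0) (𝓝 (a / 2)) := by
  apply HasDerivAt.lhopital_zero_nhdsNE (f' := deriv f) (g' := fun x => 2 * x)
  · exact Eventually.of_forall fun x => (hf x).hasDerivAt
  · exact Eventually.of_forall fun x => by simpa using hasDerivAt_pow 2 x
  · filter_upwards [self_mem_nhdsWithin] with x hx
    simpa using hx
  · exact tendsto_nhdsWithin_of_tendsto_nhds (by simpa [h0] using hf.continuous.tendsto 0)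
  · exact tendsto_nhdsWithin_of_tendsto_nhds (by simpa using (continuous_pow 2).tendsto (0 : ℝ))
  · refine ((tendsto_div_self_of_hasDerivAt_zero h2 h1).div_const 2).congr fun x => ?_
    rw [div_div, mul_comm]

theorem tendsto_abs_div_sqrt_of_apply_eq {f : ℝ → ℝ} {a : ℝ}
    (hf : Tendsto (fun x => f x / x ^ 2) (𝓝[≠] 0) (𝓝 (a / 2))) (ha : a ≠ 0) {x y : α → ℝ}
    (hx : Tendsto x l (𝓝[≠] 0)) (hxy : ∀ᶠ i in l, f (x i) = y i) :
    Tendsto (fun i => |x i| / √(y i)) l (𝓝 √(2 / a)) := by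
  have hinv : Tendsto (fun i => y i / x i ^ 2) l (𝓝 (a / 2)) :=
    (hf.comp hx).congr' (hxy.mono fun i hi => by simp only [Function.comp_apply, hi])
  have hsq : Tendsto (fun i => x i ^ 2 / y i) l (𝓝 (2 / a)) := by
    simpa [inv_div] using hinv.inv₀ (div_ne_zero ha two_ne_zero)
  refine ((continuous_sqrt.tendsto _).comp hsq).congr fun i => ?_
  rw [Function.comp_apply, sqrt_div (sq_nonneg _), sqrt_sq_eq_abs]

theorem tendsto_div_sqrt_of_apply_eq_of_pos {f : ℝ → ℝ} {a : ℝ}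
    (hf : Tendsto (fun x => f x / x ^ 2) (𝓝[≠] 0) (𝓝 (a / 2))) (ha : a ≠ 0) {x y : α → ℝ}
    (hx : Tendsto x l (𝓝[≠] 0)) (hxy : ∀ᶠ i in l, f (x i) = y i) (hpos : ∀ᶠ i in l, 0 < x i) :
    Tendsto (fun i => x i / √(y i)) l (𝓝 √(2 / a)) :=
  (tendsto_abs_div_sqrt_of_apply_eq hf ha hx hxy).congr' <|
    hpos.mono fun i hi => by rw [abs_of_pos hi]

theorem tendsto_div_sqrt_of_apply_eq_of_neg {f : ℝ → ℝ} {a : ℝ}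
    (hf : Tendsto (fun x => f x / x ^ 2) (𝓝[≠] 0) (𝓝 (a / 2))) (ha : a ≠ 0) {x y : α → ℝ}
    (hx : Tendsto x l (𝓝[≠] 0)) (hxy : ∀ᶠ i in l, f (x i) = y i) (hneg : ∀ᶠ i in l, x i < 0) :
    Tendsto (fun i => x i / √(y i)) l (𝓝 (-√(2 / a))) :=
  (tendsto_abs_div_sqrt_of_apply_eq hf ha hx hxy).neg.congr' <|
    hneg.mono fun i hi => by rw [abs_of_neg hi, neg_div, neg_neg]

theorem tendsto_apply_div_of_tendsto_div_self {g : ℝ → ℝ} {a p : ℝ}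
    (hg : Tendsto (fun x => g x / x) (𝓝[≠] 0) (𝓝 a)) {x r : α → ℝ}
    (hx : Tendsto x l (𝓝[≠] 0)) (hxr : Tendsto (fun i => x i / r i) l (𝓝 p)) :
    Tendsto (fun i => g (x i) / r i) l (𝓝 (a * p)) := by
  refine ((hg.comp hx).mul hxr).congr' ?_
  filter_upwards [tendsto_nhdsWithin_iff.1 hx |>.2] with i hi
  rw [Function.comp_apply, div_mul_div_cancel₀ hi]

theorem tendsto_tangent_intercept_length_div_sqrt {y T S DT DS : α → ℝ} {b c : ℝ} (hy : ∀ᶠ i in l, 0 < y i)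
    (hT : Tendsto (fun i => T i / √(y i)) l (𝓝 c)) (hS : Tendsto (fun i => S i / √(y i)) l (𝓝 (-c)))
    (hDT : Tendsto (fun i => DT i / √(y i)) l (𝓝 b))
    (hDS : Tendsto (fun i => DS i / √(y i)) l (𝓝 (-b))) (hb : b ≠ 0) :
    Tendsto (fun i => ((T i - S i) + y i * (DT i - DS i) / (DS i * DT i)) / √(y i)) l
      (𝓝 (2 * c - 2 / b)) := by
  have hlim := (hT.sub hS).add ((hDT.sub hDS).div (hDS.mul hDT) (by simpa using hb))
  have hval : c - -c + (b - -b) / (-b * b) = 2 * c - 2 / b := by field_simp; ring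
  rw [hval] at hlim
  have hDTne := hDT.eventually_ne hb
  have hDSne := hDS.eventually_ne (neg_ne_zero.2 hb)
  refine hlim.congr' ?_
  filter_upwards [hy, hDTne, hDSne] with i hyi hDTi hDSi
  have hDT0 : DT i ≠ 0 := (div_ne_zero_iff.1 hDTi).1
  have hDS0 : DS i ≠ 0 := (div_ne_zero_iff.1 hDSi).1
  simp only [Pi.div_apply]
  field_simp
  rw [sq_sqrt hyi.le]
  ring

end LevelSetAsymptotics

theorem two_mul_sqrt_two_div_sub (a : ℝ) (ha : 0 < a) :
    2 * √(2 / a) - 2 / (a * √(2 / a)) = √2 / √a := by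
  have hc : 0 < √(2 / a) := sqrt_pos.2 (by positivity)
  have hac : a * √(2 / a) ^ 2 = 2 := by rw [sq_sqrt (by positivity)]; field_simp
  rw [← sqrt_div zero_le_two]
  field_simp
  nlinarith [hac]

theorem stmt3 (f : ℝ → ℝ) (hf : ContDiff ℝ 3 f)
    (h0 : f 0 = 0) (h1 : deriv f 0 = 0) (h2 : 0 < deriv (deriv f) 0)
    (ε : ℝ) (hε : 0 < ε) (s t : ℝ → ℝ)
    (hst : ∀ h ∈ Ioo 0 ε, s h < 0 ∧ 0 < t h ∧ f (s h) = h ∧ f (t h) = h)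
    (hs0 : Tendsto s (nhdsWithin 0 (Ioi 0)) (nhds 0))
    (ht0 : Tendsto t (nhdsWithin 0 (Ioi 0)) (nhds 0)) :
    Tendsto (fun h =>
        ((t h - s h) + h * (deriv f (t h) - deriv f (s h)) / (deriv f (s h) * deriv f (t h)))
          / Real.sqrt h)
      (nhdsWithin 0 (Ioi 0))
      (nhds (Real.sqrt 2 / Real.sqrt (deriv (deriv f) 0))) := by
  set a := deriv (deriv f) 0
  have hda : HasDerivAt (deriv f) a 0 :=
    ((hf.deriv' (n := 2)).differentiable (by norm_num) 0).hasDerivAt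
  have hquad := tendsto_div_sq_of_hasDerivAt_deriv (hf.differentiable (by norm_num)) h0 h1 hda
  have hslope := tendsto_div_self_of_hasDerivAt_zero hda h1
  have hev : ∀ᶠ h in 𝓝[>] 0, h ∈ Ioo 0 ε := Ioo_mem_nhdsGT_of_mem ⟨le_rfl, hε⟩
  have ht : Tendsto t (𝓝[>] 0) (𝓝[≠] 0) :=
    tendsto_nhdsWithin_iff.2 ⟨ht0, hev.mono fun h hh => (hst h hh).2.1.ne'⟩
  have hs : Tendsto s (𝓝[>] 0) (𝓝[≠] 0) :=
    tendsto_nhdsWithin_iff.2 ⟨hs0, hev.mono fun h hh => (hst h hh).1.ne⟩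
  have hT := tendsto_div_sqrt_of_apply_eq_of_pos hquad h2.ne' ht
    (hev.mono fun h hh => (hst h hh).2.2.2) (hev.mono fun h hh => (hst h hh).2.1)
  have hS := tendsto_div_sqrt_of_apply_eq_of_neg hquad h2.ne' hs
    (hev.mono fun h hh => (hst h hh).2.2.1) (hev.mono fun h hh => (hst h hh).1)
  have hDS := tendsto_apply_div_of_tendsto_div_self hslope hs hS
  rw [mul_neg] at hDS
  rw [← two_mul_sqrt_two_div_sub a h2]
  exact tendsto_tangent_intercept_length_div_sqrt self_mem_nhdsWithin hT hS
    (tendsto_apply_div_of_tendsto_div_self hslope ht hT) hDS (by positivity)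
end

section
/- Let f : ℝ → ℝ be C¹ and strictly convex near 0 with f(0) = f'(0) = 0, f strictly increasing on (0, ε) and strictly decreasing on (-ε, 0). For small h > 0, let s(h) < 0 < t(h) be the two solutions of f(x) = h, and set L(h) = t(h) - s(h) and ℓ(h) = L(h) - h·(1/f'(t(h)) - 1/f'(s(h))). Then L is differentiable in h (for small h > 0) and ℓ(h) = L(h) - h·L'(h). -/
open Filter Set Topology

/-!
The branches `s` and `t` are local inverses of `f`. Strict convexity, with the minimum of `f` at
`0`, makes `f'` negative at `s h` and positive at `t h`, so by the inverse function theorem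
`L' = 1 / f'(t) - 1 / f'(s)`, which is the identity.
-/

/-- `g` agrees near `y` with the local inverse given by the inverse function theorem. -/
theorem HasStrictDerivAt.of_eventually_rightInverse_injOn {𝕜 : Type*} [NontriviallyNormedField 𝕜]
    [CompleteSpace 𝕜] {f g : 𝕜 → 𝕜} {f' y : 𝕜} {U : Set 𝕜}
    (hf : HasStrictDerivAt f f' (g y)) (hf' : f' ≠ 0) (hU : U ∈ 𝓝 (g y)) (hinj : InjOn f U)
    (hg : ∀ᶠ z in 𝓝 y, g z ∈ U ∧ f (g z) = z) :
    HasStrictDerivAt g f'⁻¹ y := by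
  have hfy : f (g y) = y := hg.self_of_nhds.2
  have hF := hf.hasStrictFDerivAt_equiv hf'
  set G := hF.localInverse f _ (g y)
  have hGy : G y = g y := by simpa only [hfy] using hF.localInverse_apply_image
  have hG : HasStrictDerivAt G f'⁻¹ y := by simpa only [hfy] using hf.to_localInverse hf'
  have hGcont : ContinuousAt G y := by simpa only [hfy] using hF.localInverse_continuousAt
  have hfG : ∀ᶠ z in 𝓝 y, f (G z) = z := by simpa only [hfy] using hF.eventually_right_inverse
  have hGU : ∀ᶠ z in 𝓝 y, G z ∈ U := hGcont (hGy ▸ hU)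
  refine hG.congr_of_eventuallyEq ?_
  filter_upwards [hg, hfG, hGU] with z ⟨hgz, hfgz⟩ hfGz hGz
  exact hinj hGz hgz (hfGz.trans hfgz.symm)

theorem StrictConvexOn.deriv_pos_of_le {S : Set ℝ} {f : ℝ → ℝ} (hfc : StrictConvexOn ℝ S f)
    {x y : ℝ} (hx : x ∈ S) (hy : y ∈ S) (hxy : x < y) (hfd : DifferentiableAt ℝ f y)
    (hf : f x ≤ f y) : 0 < deriv f y := by
  refine lt_of_le_of_lt ?_ (hfc.slope_lt_deriv hx hy hxy hfd)
  rw [slope_def_field]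
  exact div_nonneg (sub_nonneg.2 hf) (sub_nonneg.2 hxy.le)

theorem StrictConvexOn.deriv_neg_of_le {S : Set ℝ} {f : ℝ → ℝ} (hfc : StrictConvexOn ℝ S f)
    {x y : ℝ} (hx : x ∈ S) (hy : y ∈ S) (hxy : x < y) (hfd : DifferentiableAt ℝ f x)
    (hf : f y ≤ f x) : deriv f x < 0 := by
  refine lt_of_lt_of_le (hfc.deriv_lt_slope hx hy hxy hfd) ?_
  rw [slope_def_field]
  exact div_nonpos_of_nonpos_of_nonneg (sub_nonpos.2 hf) (sub_nonneg.2 hxy.le)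

theorem stmt4_general (f : ℝ → ℝ) (hf : ContDiff ℝ 1 f)
    (ε : ℝ)
    (hconv : StrictConvexOn ℝ (Ioo (-ε) ε) f)
    (h0 : f 0 = 0)
    (hmono : StrictMonoOn f (Ico 0 ε)) (hanti : StrictAntiOn f (Ioc (-ε) 0))
    (δ : ℝ) (s t : ℝ → ℝ)
    (hst : ∀ h ∈ Ioo 0 δ, s h ∈ Ioo (-ε) 0 ∧ t h ∈ Ioo 0 ε ∧ f (s h) = h ∧ f (t h) = h)
    (L ℓ : ℝ → ℝ)
    (hL : ∀ h, L h = t h - s h)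
    (hℓ : ∀ h, ℓ h = L h - h * (1 / deriv f (t h) - 1 / deriv f (s h))) :
    ∀ h ∈ Ioo 0 δ, DifferentiableAt ℝ L h ∧ ℓ h = L h - h * deriv L h := by
  intro h hh
  obtain ⟨⟨hs_gt, hs_neg⟩, ⟨ht_pos, ht_lt⟩, hfs, hft⟩ := hst h hh
  have hstrict (x : ℝ) : HasStrictDerivAt f (deriv f x) x := hf.hasStrictDerivAt one_ne_zero
  have hzero : (0 : ℝ) ∈ Ioo (-ε) ε := ⟨hs_gt.trans hs_neg, ht_pos.trans ht_lt⟩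
  have hdt : 0 < deriv f (t h) := hconv.deriv_pos_of_le hzero ⟨by linarith, ht_lt⟩ ht_pos
    (hf.differentiable one_ne_zero _) (by rw [h0, hft]; exact hh.1.le)
  have hds : deriv f (s h) < 0 := hconv.deriv_neg_of_le ⟨hs_gt, by linarith⟩ hzero hs_neg
    (hf.differentiable one_ne_zero _) (by rw [h0, hfs]; exact hh.1.le)
  have hnear : ∀ᶠ z in 𝓝 h, z ∈ Ioo 0 δ := isOpen_Ioo.mem_nhds hh
  have ht' : HasDerivAt t (deriv f (t h))⁻¹ h :=
    ((hstrict _).of_eventually_rightInverse_injOn hdt.ne' (isOpen_Ioo.mem_nhds ⟨ht_pos, ht_lt⟩)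
      (hmono.injOn.mono Ioo_subset_Ico_self)
      (hnear.mono fun z hz => ⟨(hst z hz).2.1, (hst z hz).2.2.2⟩)).hasDerivAt
  have hs' : HasDerivAt s (deriv f (s h))⁻¹ h :=
    ((hstrict _).of_eventually_rightInverse_injOn hds.ne (isOpen_Ioo.mem_nhds ⟨hs_gt, hs_neg⟩)
      (hanti.injOn.mono Ioo_subset_Ioc_self)
      (hnear.mono fun z hz => ⟨(hst z hz).1, (hst z hz).2.2.1⟩)).hasDerivAt
  have hL' : HasDerivAt L ((deriv f (t h))⁻¹ - (deriv f (s h))⁻¹) h := funext hL ▸ ht'.sub hs'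
  refine ⟨hL'.differentiableAt, ?_⟩
  rw [hℓ, hL'.deriv, one_div, one_div]

theorem stmt4 (f : ℝ → ℝ) (hf : ContDiff ℝ 1 f)
    (ε : ℝ) (hε : 0 < ε)
    (hconv : StrictConvexOn ℝ (Ioo (-ε) ε) f)
    (h0 : f 0 = 0) (h1 : deriv f 0 = 0)
    (hmono : StrictMonoOn f (Ico 0 ε)) (hanti : StrictAntiOn f (Ioc (-ε) 0))
    (δ : ℝ) (hδ : 0 < δ) (s t : ℝ → ℝ)
    (hst : ∀ h ∈ Ioo 0 δ, s h ∈ Ioo (-ε) 0 ∧ t h ∈ Ioo 0 ε ∧ f (s h) = h ∧ f (t h) = h)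
    (L ℓ : ℝ → ℝ)
    (hL : ∀ h, L h = t h - s h)
    (hℓ : ∀ h, ℓ h = L h - h * (1 / deriv f (t h) - 1 / deriv f (s h))) :
    ∀ h ∈ Ioo 0 δ, DifferentiableAt ℝ L h ∧ ℓ h = L h - h * deriv L h :=
  stmt4_general f hf ε hconv h0 hmono hanti δ s t hst L ℓ hL hℓ
end

section
/- Let f : I → ℝ be differentiable on an open interval I ⊆ (0, ∞) with f, f' positive, and suppose 2/f'(t) = t/f(t) + a for a constant a. Then there is a constant b such that (t − a·f(t))² = 2b·f(t) for all t ∈ I; i.e., the graph of f lies on the conic x² − 2axy + a²y² − 2by = 0, which is a parabola (for b ≠ 0) or a line. -/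
/-!
The ODE says exactly that `(t - a f)² / f` is a first integral: its derivative is
`(t - a f) (2 f - f' (t + a f)) / f²`, and the second factor vanishes by the ODE.
Being constant on the interval, it equals `2 b` for some `b`.
-/

open Real Set

noncomputable def conicInvariant (a : ℝ) (f : ℝ → ℝ) (t : ℝ) : ℝ :=
  (t - a * f t) ^ 2 / f t

theorem hasDerivAt_conicInvariant {a x f' : ℝ} {f : ℝ → ℝ} (hf : HasDerivAt f f' x)
    (hfx : f x ≠ 0) (hode : f' * (x + a * f x) = 2 * f x) :
    HasDerivAt (conicInvariant a f) 0 x := by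
  have hderiv : HasDerivAt (conicInvariant a f)
      ((2 * (x - a * f x) * (1 - a * f') * f x - (x - a * f x) ^ 2 * f') / f x ^ 2) x := by
    show HasDerivAt (fun t => (t - a * f t) ^ 2 / f t) _ x
    simpa using (((hasDerivAt_id' x).fun_sub (hf.const_mul a)).fun_pow 2).fun_div hf hfx
  have hnum : 2 * (x - a * f x) * (1 - a * f') * f x - (x - a * f x) ^ 2 * f'
      = (x - a * f x) * (2 * f x - f' * (x + a * f x)) := by ring
  rwa [hnum, hode, sub_self, mul_zero, zero_div] at hderiv

theorem deriv_mul_add_eq_of_two_div_deriv_eq {f : ℝ → ℝ} {a t : ℝ} (hft : f t ≠ 0)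
    (hdt : deriv f t ≠ 0) (hode : 2 / deriv f t = t / f t + a) :
    deriv f t * (t + a * f t) = 2 * f t := by
  field_simp at hode
  linarith

theorem stmt9_general (α β : ℝ) (f : ℝ → ℝ)
    (hf : ∀ t ∈ Ioo α β, DifferentiableAt ℝ f t)
    (hfpos : ∀ t ∈ Ioo α β, 0 < f t) (hfd : ∀ t ∈ Ioo α β, 0 < deriv f t)
    (a : ℝ) (hode : ∀ t ∈ Ioo α β, 2 / deriv f t = t / f t + a) :
    ∃ b : ℝ, ∀ t ∈ Ioo α β,
      (t - a * f t) ^ 2 = 2 * b * f t ∧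
      t ^ 2 - 2 * a * t * f t + a ^ 2 * (f t) ^ 2 - 2 * b * f t = 0 := by
  have hinv : ∀ t ∈ Ioo α β, HasDerivAt (conicInvariant a f) 0 t := fun t ht =>
    hasDerivAt_conicInvariant (hf t ht).hasDerivAt (hfpos t ht).ne'
      (deriv_mul_add_eq_of_two_div_deriv_eq (hfpos t ht).ne' (hfd t ht).ne' (hode t ht))
  obtain ⟨c, hc⟩ := isOpen_Ioo.exists_is_const_of_deriv_eq_zero isPreconnected_Ioo
    (fun t ht => (hinv t ht).differentiableAt.differentiableWithinAt)
    (fun t ht => (hinv t ht).deriv)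
  refine ⟨c / 2, fun t ht => ?_⟩
  have hsq : (t - a * f t) ^ 2 = 2 * (c / 2) * f t := by
    rw [← hc t ht, conicInvariant]
    field_simp [(hfpos t ht).ne']
  exact ⟨hsq, by linear_combination hsq⟩

theorem stmt9 (α β : ℝ) (hα : 0 < α) (f : ℝ → ℝ)
    (hf : ∀ t ∈ Ioo α β, DifferentiableAt ℝ f t)
    (hfpos : ∀ t ∈ Ioo α β, 0 < f t) (hfd : ∀ t ∈ Ioo α β, 0 < deriv f t)
    (a : ℝ) (hode : ∀ t ∈ Ioo α β, 2 / deriv f t = t / f t + a) :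
    ∃ b : ℝ, ∀ t ∈ Ioo α β,
      (t - a * f t) ^ 2 = 2 * b * f t ∧
      t ^ 2 - 2 * a * t * f t + a ^ 2 * (f t) ^ 2 - 2 * b * f t = 0 :=
  stmt9_general α β f hf hfpos hfd a hode
end

section
/- Let f : ℝ → ℝ be C³ with f(0) = f'(0) = 0 and f''(0) > 0. With s(h) < 0 < t(h) solving f(x) = h, L(h) = t − s, ℓ(h) = L(h) + h(f'(t) − f'(s))/(f'(s)f'(t)), and W(h) = (1/2)(L(h) + ℓ(h))h, one has W(h)/h^{3/2} → 3√2/(2√(f''(0))) as h → 0⁺. -/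
open Real Filter Set Topology

/-!
Near the origin `f x ≈ f''(0) x² / 2`, so the endpoints of the chord at height `h` satisfy
`s, t ≈ ∓ √(2h / f''(0))` and their slopes `f'(s), f'(t) ≈ f''(0) s, f''(0) t`. The area `W` is
homogeneous of degree three under `(s, t, f'(s), f'(t), h) ↦ (x s, x t, x f'(s), x f'(t), x² h)`,
so `W(h) / h^{3/2}` is the area of the data rescaled by `1/√h` at height one, which converges to
the area of the symmetric limit configuration.
-/

-- `W(h)` for the chord `[s, t]` with endpoint slopes `u = f'(s)`, `v = f'(t)`.
noncomputable def trapezoidArea (s t u v h : ℝ) : ℝ :=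
  (1 / 2) * ((t - s) + ((t - s) + h * (v - u) / (u * v))) * h

lemma trapezoidArea_div_pow_three (s t u v : ℝ) {x : ℝ} (hx : x ≠ 0) :
    trapezoidArea s t u v (x ^ 2) / x ^ 3 = trapezoidArea (s / x) (t / x) (u / x) (v / x) 1 := by
  unfold trapezoidArea
  field_simp

lemma tendsto_trapezoidArea {α : Type*} {l : Filter α} {s t u v : α → ℝ} {s₀ t₀ u₀ v₀ : ℝ}
    (hs : Tendsto s l (𝓝 s₀)) (ht : Tendsto t l (𝓝 t₀)) (hu : Tendsto u l (𝓝 u₀))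
    (hv : Tendsto v l (𝓝 v₀)) (huv : u₀ * v₀ ≠ 0) :
    Tendsto (fun i => trapezoidArea (s i) (t i) (u i) (v i) 1) l
      (𝓝 (trapezoidArea s₀ t₀ u₀ v₀ 1)) := by
  unfold trapezoidArea
  have hquot : Tendsto (fun i => 1 * (v i - u i) / (u i * v i)) l (𝓝 (1 * (v₀ - u₀) / (u₀ * v₀))) :=
    (tendsto_const_nhds.mul (hv.sub hu)).div (hu.mul hv) huv
  exact ((((ht.sub hs).add ((ht.sub hs).add hquot)).const_mul _).mul tendsto_const_nhds)

section Quadratic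

variable {f : ℝ → ℝ}

lemma tendsto_deriv_div_self (hd : DifferentiableAt ℝ (deriv f) 0) (h1 : deriv f 0 = 0) :
    Tendsto (fun x => deriv f x / x) (𝓝[≠] 0) (𝓝 (deriv (deriv f) 0)) := by
  have h := hd.hasDerivAt
  rw [hasDerivAt_iff_tendsto_slope] at h
  refine h.congr fun x => ?_
  simp [slope_fun_def, h1, div_eq_mul_inv, mul_comm]

lemma tendsto_div_sq_of_deriv_eq_zero (hf : Differentiable ℝ f)
    (hd : DifferentiableAt ℝ (deriv f) 0) (h0 : f 0 = 0) (h1 : deriv f 0 = 0) :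
    Tendsto (fun x => f x / x ^ 2) (𝓝[≠] 0) (𝓝 (deriv (deriv f) 0 / 2)) := by
  have hsq : ∀ x : ℝ, deriv (fun x : ℝ => x ^ 2) x = 2 * x := fun x => by simp
  apply deriv.lhopital_zero_nhdsNE
  · exact .of_forall fun x => hf.differentiableAt
  · filter_upwards [self_mem_nhdsWithin] with x hx
    rw [hsq]
    exact mul_ne_zero two_ne_zero hx
  · exact (hf.continuous.tendsto' 0 0 h0).mono_left nhdsWithin_le_nhds
  · exact ((continuous_pow 2).tendsto' (0 : ℝ) 0 (by simp)).mono_left nhdsWithin_le_nhds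
  · refine ((tendsto_deriv_div_self hd h1).div_const 2).congr fun x => ?_
    rw [hsq, div_div, mul_comm]

end Quadratic

lemma tendsto_abs_div_sqrt_of_apply_eq_s15 {f g : ℝ → ℝ} {l : Filter ℝ} {q : ℝ} (hq : 0 < q)
    (hf : Tendsto (fun x => f x / x ^ 2) (𝓝[≠] 0) (𝓝 q)) (hg : Tendsto g l (𝓝[≠] 0))
    (hfg : ∀ᶠ h in l, f (g h) = h) :
    Tendsto (fun h => |g h| / √h) l (𝓝 (√q)⁻¹) := by
  have hsqrt : Tendsto (fun h => √(h / g h ^ 2)) l (𝓝 (√q)) :=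
    (continuous_sqrt.tendsto q).comp ((hf.comp hg).congr' (hfg.mono fun h hh => by simp [hh]))
  refine (hsqrt.inv₀ (sqrt_pos.mpr hq).ne').congr fun h => ?_
  rw [sqrt_div' _ (sq_nonneg _), sqrt_sq_eq_abs, inv_div]

lemma tendsto_comp_div_of_tendsto_div_self {φ g r : ℝ → ℝ} {l : Filter ℝ} {c a : ℝ}
    (hφ : Tendsto (fun x => φ x / x) (𝓝[≠] 0) (𝓝 c)) (hg : Tendsto g l (𝓝[≠] 0))
    (hgr : Tendsto (fun h => g h / r h) l (𝓝 a)) :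
    Tendsto (fun h => φ (g h) / r h) l (𝓝 (c * a)) := by
  refine ((hφ.comp hg).mul hgr).congr' ?_
  filter_upwards [tendsto_nhdsWithin_iff.mp hg |>.2] with h hh
  simp only [Function.comp_apply]
  rw [div_mul_div_cancel₀ hh]

lemma trapezoidArea_symm_value {c : ℝ} (hc : 0 < c) :
    trapezoidArea (-(√(c / 2))⁻¹) (√(c / 2))⁻¹ (c * -(√(c / 2))⁻¹) (c * (√(c / 2))⁻¹) 1
      = 3 * √2 / (2 * √c) := by
  have h2 : √2 ^ 2 = 2 := sq_sqrt zero_le_two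
  have hc' : √c ^ 2 = c := sq_sqrt hc.le
  have : 0 < √c := sqrt_pos.mpr hc
  rw [sqrt_div' _ zero_le_two]
  unfold trapezoidArea
  field_simp
  rw [h2, hc']
  ring

theorem stmt15 (f : ℝ → ℝ) (hf : ContDiff ℝ 3 f)
    (h0 : f 0 = 0) (h1 : deriv f 0 = 0) (h2 : 0 < deriv (deriv f) 0)
    (ε : ℝ) (hε : 0 < ε) (s t : ℝ → ℝ)
    (hst : ∀ h ∈ Ioo 0 ε, s h < 0 ∧ 0 < t h ∧ f (s h) = h ∧ f (t h) = h)
    (hs0 : Tendsto s (nhdsWithin 0 (Ioi 0)) (nhds 0))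
    (ht0 : Tendsto t (nhdsWithin 0 (Ioi 0)) (nhds 0))
    (L ℓ W : ℝ → ℝ)
    (hL : ∀ h, L h = t h - s h)
    (hℓ : ∀ h, ℓ h = L h + h * (deriv f (t h) - deriv f (s h))
        / (deriv f (s h) * deriv f (t h)))
    (hW : ∀ h, W h = (1 / 2) * (L h + ℓ h) * h) :
    Tendsto (fun h => W h / (h * Real.sqrt h)) (nhdsWithin 0 (Ioi 0))
      (nhds (3 * Real.sqrt 2 / (2 * Real.sqrt (deriv (deriv f) 0)))) := by
  set c := deriv (deriv f) 0
  have hd : DifferentiableAt ℝ (deriv f) 0 :=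
    ((contDiff_succ_iff_deriv (n := 2)).mp hf).2.2.differentiable (by norm_num) 0
  have hquad := tendsto_div_sq_of_deriv_eq_zero (hf.differentiable (by norm_num)) hd h0 h1
  have hslope := tendsto_deriv_div_self hd h1
  have hev : ∀ᶠ h in 𝓝[>] 0, s h < 0 ∧ 0 < t h ∧ f (s h) = h ∧ f (t h) = h :=
    Filter.mem_of_superset (Ioo_mem_nhdsGT hε) hst
  have hs : Tendsto s (𝓝[>] 0) (𝓝[≠] 0) :=
    tendsto_nhdsWithin_of_tendsto_nhds_of_eventually_within _ hs0 (hev.mono fun _ h => h.1.ne)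
  have ht : Tendsto t (𝓝[>] 0) (𝓝[≠] 0) :=
    tendsto_nhdsWithin_of_tendsto_nhds_of_eventually_within _ ht0 (hev.mono fun _ h => h.2.1.ne')
  have hc2 : 0 < c / 2 := half_pos h2
  have hS : Tendsto (fun h => s h / √h) (𝓝[>] 0) (𝓝 (-(√(c / 2))⁻¹)) :=
    ((tendsto_abs_div_sqrt_of_apply_eq_s15 hc2 hquad hs (hev.mono fun _ h => h.2.2.1)).neg).congr'
      (hev.mono fun h hh => by rw [abs_of_neg hh.1, neg_div, neg_neg])
  have hT : Tendsto (fun h => t h / √h) (𝓝[>] 0) (𝓝 (√(c / 2))⁻¹) :=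
    (tendsto_abs_div_sqrt_of_apply_eq_s15 hc2 hquad ht (hev.mono fun _ h => h.2.2.2)).congr'
      (hev.mono fun h hh => by rw [abs_of_pos hh.2.1])
  have ha : (√(c / 2))⁻¹ ≠ 0 := inv_ne_zero (sqrt_pos.mpr hc2).ne'
  have hlim := tendsto_trapezoidArea hS hT (tendsto_comp_div_of_tendsto_div_self hslope hs hS)
    (tendsto_comp_div_of_tendsto_div_self hslope ht hT)
    (mul_ne_zero (mul_ne_zero h2.ne' (neg_ne_zero.mpr ha)) (mul_ne_zero h2.ne' ha))
  rw [trapezoidArea_symm_value h2] at hlim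
  refine hlim.congr' (eventually_mem_nhdsWithin.mono fun h (hh : 0 < h) => ?_)
  have hsqrt : √h ≠ 0 := (sqrt_pos.mpr hh).ne'
  rw [← trapezoidArea_div_pow_three _ _ _ _ hsqrt, sq_sqrt hh.le, pow_succ, sq_sqrt hh.le]
  dsimp only
  rw [hW, hℓ, hL, trapezoidArea]
end

section
/- Let f : ℝ → ℝ be C¹, strictly convex near 0, with f(0) = f'(0) = 0. Fix small h > 0 and let s < 0 < t solve f(x) = h. Define L = t − s, ℓ = L + h(f'(t) − f'(s))/(f'(s)f'(t)), T = hL/2 (area of the triangle with apex at the origin and base the chord), V = (1/2)(−f'(s)f'(t)/(f'(t) − f'(s)))L² (area of the triangle formed by the two tangent lines at the chord endpoints and the chord), and let U be the area of the triangle formed by the three tangent lines (at the origin and at the two chord endpoints). Then the following are equivalent: (i) U = T/2, (ii) T = V/2, (iii) ℓ = L/2. -/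
open Real Set MeasureTheory

private lemma hull01 :
    convexHull ℝ ({((0:ℝ),(0:ℝ)), (1,0), (0,1)} : Set (ℝ × ℝ))
      = {p : ℝ × ℝ | 0 ≤ p.1 ∧ 0 ≤ p.2 ∧ p.1 + p.2 ≤ 1} := by
  apply Subset.antisymm
  · apply convexHull_min
    · rintro p hp
      rcases hp with rfl | rfl | rfl <;> norm_num
    · rintro ⟨x₁, y₁⟩ ⟨h1, h2, h3⟩ ⟨x₂, y₂⟩ ⟨h4, h5, h6⟩ a b ha hb hab
      simp only [Prod.smul_mk, Prod.mk_add_mk, smul_eq_mul, mem_setOf_eq] at *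
      refine ⟨by nlinarith, by nlinarith, by nlinarith⟩
  · rintro ⟨x, y⟩ ⟨hx, hy, hxy⟩
    rw [show ({((0:ℝ),(0:ℝ)), (1,0), (0,1)} : Set (ℝ × ℝ))
        = insert ((0:ℝ),(0:ℝ)) {(1,0),(0,1)} from rfl,
      convexHull_insert ⟨(1,0), by simp⟩, mem_convexJoin]
    rcases eq_or_lt_of_le (by linarith : (0:ℝ) ≤ x + y) with hc | hc
    · refine ⟨(0,0), rfl, (1,0), ?_, ?_⟩
      · rw [convexHull_pair]; exact left_mem_segment _ _ _
      · have hx0 : x = 0 := by linarith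
        have hy0 : y = 0 := by linarith
        rw [hx0, hy0]
        exact left_mem_segment _ _ _
    · refine ⟨(0,0), rfl, (x/(x+y), y/(x+y)), ?_, ?_⟩
      · rw [convexHull_pair]
        refine ⟨x/(x+y), y/(x+y), by positivity, by positivity, by field_simp, ?_⟩
        simp only [Prod.smul_mk, Prod.mk_add_mk, smul_eq_mul]
        norm_num
      · refine ⟨1 - (x+y), x+y, by linarith, by linarith, by ring, ?_⟩
        simp only [Prod.smul_mk, Prod.mk_add_mk, smul_eq_mul]
        rw [Prod.mk.injEq]
        constructor <;> field_simp <;> ring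

private lemma line1_null : volume {p : ℝ × ℝ | p.1 = 0} = 0 := by
  have : {p : ℝ × ℝ | p.1 = 0} = ({0} : Set ℝ) ×ˢ (univ : Set ℝ) := by
    ext ⟨x, y⟩; simp [eq_comm]
  rw [this, Measure.volume_eq_prod, Measure.prod_prod]
  simp

private lemma line2_null : volume {p : ℝ × ℝ | p.2 = 0} = 0 := by
  have : {p : ℝ × ℝ | p.2 = 0} = (univ : Set ℝ) ×ˢ ({0} : Set ℝ) := by
    ext ⟨x, y⟩; simp [eq_comm]
  rw [this, Measure.volume_eq_prod, Measure.prod_prod]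
  simp

private lemma line3_null : volume {p : ℝ × ℝ | p.1 + p.2 = 1} = 0 := by
  set l := Matrix.toLin (Module.Basis.finTwoProd ℝ) (Module.Basis.finTwoProd ℝ) !![1,0;-1,1] with hl
  have himg : {p : ℝ × ℝ | p.1 + p.2 = 1}
      = l '' ((univ : Set ℝ) ×ˢ ({1} : Set ℝ)) := by
    ext ⟨x, y⟩
    simp only [mem_setOf_eq, mem_image, mem_prod, mem_univ, mem_singleton_iff, hl,
      Matrix.toLin_finTwoProd_apply, Prod.mk.injEq, Prod.exists, true_and]
    constructor
    · rintro hxy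
      exact ⟨x, 1, rfl, by push_cast; ring_nf, by push_cast; linarith⟩
    · rintro ⟨u, v, rfl, h1, h2⟩
      rw [← h1, ← h2]; push_cast; ring
  rw [himg, Measure.addHaar_image_linearMap]
  have : volume ((univ : Set ℝ) ×ˢ ({1} : Set ℝ)) = 0 := by
    rw [Measure.volume_eq_prod, Measure.prod_prod]; simp
  rw [this, mul_zero]

private lemma vol01 :
    volume {p : ℝ × ℝ | 0 ≤ p.1 ∧ 0 ≤ p.2 ∧ p.1 + p.2 ≤ 1} = ENNReal.ofReal (1/2) := by
  set S := regionBetween (fun _ : ℝ => (0:ℝ)) (fun x => 1 - x) (Ioo 0 1) with hSdef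
  have h0' : IntegrableOn (fun _ : ℝ => (0:ℝ)) (Ioo 0 1) volume :=
    (integrableOn_const_iff (by simp)).mpr (Or.inl (by simp))
  have hg : IntegrableOn (fun x : ℝ => 1 - x) (Ioo 0 1) volume :=
    (((continuous_const.sub continuous_id).continuousOn).integrableOn_compact
      isCompact_Icc).mono_set Ioo_subset_Icc_self
  have hSvol : volume S = ENNReal.ofReal (1/2) := by
    rw [hSdef, Measure.volume_eq_prod,
      volume_regionBetween_eq_integral h0' hg measurableSet_Ioo
        (fun x hx => by simp only [mem_Ioo] at hx; simp; linarith [hx.2])]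
    congr 1
    have : ∀ y : ℝ, ((fun x : ℝ => 1 - x) - fun _ : ℝ => (0:ℝ)) y = 1 - y := by
      intro y; simp
    rw [setIntegral_congr_fun measurableSet_Ioo (fun y _ => this y)]
    rw [← integral_Ioc_eq_integral_Ioo, ← intervalIntegral.integral_of_le zero_le_one]
    rw [intervalIntegral.integral_sub intervalIntegrable_const
      intervalIntegral.intervalIntegrable_id]
    simp
    norm_num
  have hsubS : S ⊆ {p : ℝ × ℝ | 0 ≤ p.1 ∧ 0 ≤ p.2 ∧ p.1 + p.2 ≤ 1} := by
    rintro ⟨x, y⟩ hp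
    simp only [hSdef, regionBetween, mem_setOf_eq, mem_Ioo] at hp
    obtain ⟨⟨hx0, hx1⟩, hy0, hy1⟩ := hp
    exact ⟨le_of_lt hx0, le_of_lt hy0, by linarith⟩
  have hsub : {p : ℝ × ℝ | 0 ≤ p.1 ∧ 0 ≤ p.2 ∧ p.1 + p.2 ≤ 1}
      ⊆ S ∪ ({p : ℝ × ℝ | p.1 = 0} ∪ ({p : ℝ × ℝ | p.2 = 0}
          ∪ {p : ℝ × ℝ | p.1 + p.2 = 1})) := by
    rintro ⟨x, y⟩ ⟨hx, hy, hxy⟩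
    simp only [hSdef, regionBetween, mem_union, mem_setOf_eq, mem_Ioo]
    rcases eq_or_lt_of_le hx with h1 | h1
    · exact Or.inr (Or.inl h1.symm)
    rcases eq_or_lt_of_le hy with h2 | h2
    · exact Or.inr (Or.inr (Or.inl h2.symm))
    rcases eq_or_lt_of_le hxy with h3 | h3
    · exact Or.inr (Or.inr (Or.inr h3))
    · exact Or.inl ⟨⟨h1, by linarith⟩, h2, by linarith⟩
  apply le_antisymm
  · calc volume {p : ℝ × ℝ | 0 ≤ p.1 ∧ 0 ≤ p.2 ∧ p.1 + p.2 ≤ 1}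
        ≤ volume (S ∪ ({p : ℝ × ℝ | p.1 = 0} ∪ ({p : ℝ × ℝ | p.2 = 0}
          ∪ {p : ℝ × ℝ | p.1 + p.2 = 1}))) := measure_mono hsub
      _ ≤ volume S + volume ({p : ℝ × ℝ | p.1 = 0} ∪ ({p : ℝ × ℝ | p.2 = 0}
          ∪ {p : ℝ × ℝ | p.1 + p.2 = 1})) := measure_union_le _ _
      _ = volume S := by
          rw [measure_union_null line1_null (measure_union_null line2_null line3_null),
            add_zero]
      _ = ENNReal.ofReal (1/2) := hSvol
  · rw [← hSvol]
    exact measure_mono hsubS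

private lemma triangle_area (a b c : ℝ × ℝ) :
    (volume (convexHull ℝ ({a, b, c} : Set (ℝ × ℝ)))).toReal
      = |(b.1 - a.1) * (c.2 - a.2) - (c.1 - a.1) * (b.2 - a.2)| / 2 := by
  set l := Matrix.toLin (Module.Basis.finTwoProd ℝ) (Module.Basis.finTwoProd ℝ)
      !![b.1 - a.1, c.1 - a.1; b.2 - a.2, c.2 - a.2] with hldef
  have hdet : LinearMap.det l = (b.1 - a.1) * (c.2 - a.2) - (c.1 - a.1) * (b.2 - a.2) := by
    rw [hldef, LinearMap.det_toLin, Matrix.det_fin_two]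
    simp
  have happ : ∀ p : ℝ × ℝ,
      l p = ((b.1 - a.1) * p.1 + (c.1 - a.1) * p.2, (b.2 - a.2) * p.1 + (c.2 - a.2) * p.2) := by
    intro p
    rw [hldef, Matrix.toLin_finTwoProd_apply]
  set φ : ℝ × ℝ →ᵃ[ℝ] ℝ × ℝ :=
    ⟨fun p => l p + a, l, fun p v => by simp [map_add]; abel⟩ with hφdef
  have hφ : ∀ p, φ p = l p + a := fun p => rfl
  have himg : φ '' ({((0:ℝ),(0:ℝ)), (1,0), (0,1)} : Set (ℝ × ℝ)) = {a, b, c} := by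
    have e0 : φ ((0:ℝ),(0:ℝ)) = a := by rw [hφ, happ]; simp
    have e1 : φ ((1:ℝ),(0:ℝ)) = b := by
      rw [hφ, happ]
      rw [Prod.ext_iff]
      simp only [Prod.fst_add, Prod.snd_add]
      constructor <;> ring
    have e2 : φ ((0:ℝ),(1:ℝ)) = c := by
      rw [hφ, happ]
      rw [Prod.ext_iff]
      simp only [Prod.fst_add, Prod.snd_add]
      constructor <;> ring
    simp only [image_insert_eq, image_singleton, e0, e1, e2]
  have hfull : convexHull ℝ ({a, b, c} : Set (ℝ × ℝ))
      = φ '' (convexHull ℝ ({((0:ℝ),(0:ℝ)), (1,0), (0,1)} : Set (ℝ × ℝ))) := by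
    rw [AffineMap.image_convexHull, himg]
  rw [hfull]
  have himg2 : φ '' (convexHull ℝ ({((0:ℝ),(0:ℝ)), (1,0), (0,1)} : Set (ℝ × ℝ)))
      = (fun x => x + a) '' (l '' (convexHull ℝ
          ({((0:ℝ),(0:ℝ)), (1,0), (0,1)} : Set (ℝ × ℝ)))) := by
    rw [Set.image_image]
    rfl
  rw [himg2, image_add_right, measure_preimage_add_right,
    Measure.addHaar_image_linearMap, hull01, vol01, hdet,
    ENNReal.toReal_mul, ENNReal.toReal_ofReal (abs_nonneg _),
    ENNReal.toReal_ofReal (by norm_num)]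
  ring

private lemma key_alg (h Lr D q P U T V l : ℝ)
    (hh : 0 < h) (hL : 0 < Lr) (hD : 0 < D) (hq : 0 < q) (hPpos : 0 < P)
    (hP : P = q * Lr - h * D)
    (hU : U = P ^ 2 / (2 * (D * q))) (hT : T = h * Lr / 2)
    (hV : V = (1/2) * (q / D) * Lr ^ 2) (hl : l = P / q) :
    (U = T / 2 ↔ T = V / 2) ∧ ((T = V / 2) ↔ l = Lr / 2) := by
  have hDq : (0:ℝ) < 2 * (D * q) := by positivity
  have A1 : (U = T / 2) ↔ 2 * P ^ 2 = h * Lr * (D * q) := by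
    rw [hU, hT, show h * Lr / 2 / 2 = h * Lr / 4 by ring,
      div_eq_div_iff hDq.ne' (by norm_num : (4:ℝ) ≠ 0)]
    constructor <;> intro hx
    · linear_combination hx / 2
    · linear_combination 2 * hx
  have A2 : (T = V / 2) ↔ q * Lr = 2 * h * D := by
    rw [hT, hV, show (1/2) * (q / D) * Lr ^ 2 / 2 = q * Lr ^ 2 / (4 * D) by ring,
      div_eq_div_iff (by norm_num : (2:ℝ) ≠ 0) (by positivity : (4 * D) ≠ 0)]
    constructor <;> intro hx
    · have hz : Lr * (q * Lr - 2 * h * D) = 0 := by linear_combination -hx / 2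
      rcases mul_eq_zero.mp hz with h1 | h2
      · exact absurd h1 hL.ne'
      · linarith
    · linear_combination (-2 * Lr) * hx
  have A3 : (l = Lr / 2) ↔ q * Lr = 2 * h * D := by
    rw [hl, div_eq_div_iff hq.ne' (by norm_num : (2:ℝ) ≠ 0)]
    constructor <;> intro hx
    · linear_combination hx - 2 * hP
    · linear_combination 2 * hP + hx
  have A12 : (2 * P ^ 2 = h * Lr * (D * q)) ↔ q * Lr = 2 * h * D := by
    constructor <;> intro hx
    · have key : (2 * P + h * D) * (P - h * D) = 0 := by
        linear_combination hx - h * D * hP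
      rcases mul_eq_zero.mp key with h1 | h2
      · exfalso; nlinarith
      · linear_combination h2 - hP
    · have hPe : P = h * D := by linear_combination hP + hx
      linear_combination 2 * (P + h * D) * hPe - h * D * hx
  exact ⟨A1.trans (A12.trans A2.symm), A2.trans A3.symm⟩

theorem stmt16 (f : ℝ → ℝ) (hf : ContDiff ℝ 1 f)
    (ε : ℝ) (hε : 0 < ε) (hconv : StrictConvexOn ℝ (Ioo (-ε) ε) f)
    (h0 : f 0 = 0) (h1 : deriv f 0 = 0)
    (h s t : ℝ) (hh : 0 < h)
    (hs : s ∈ Ioo (-ε) (0:ℝ)) (ht : t ∈ Ioo (0:ℝ) ε)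
    (hfs : f s = h) (hft : f t = h)
    (L ℓ T V U : ℝ)
    (hL : L = t - s)
    (hℓ : ℓ = L + h * (deriv f t - deriv f s) / (deriv f s * deriv f t))
    (hT : T = h * L / 2)
    (hV : V = (1 / 2) * (-(deriv f s * deriv f t) / (deriv f t - deriv f s)) * L ^ 2)
    (hU : U = (volume (convexHull ℝ
      ({((t * deriv f t - s * deriv f s) / (deriv f t - deriv f s),
          h + (t - s) * deriv f s * deriv f t / (deriv f t - deriv f s)),
        (s - h / deriv f s, 0), (t - h / deriv f t, 0)} : Set (ℝ × ℝ)))).toReal) :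
    (U = T / 2 ↔ T = V / 2) ∧ (T = V / 2 ↔ ℓ = L / 2) := by
  have hdiff : Differentiable ℝ f := hf.differentiable one_ne_zero
  obtain ⟨hs1, hs2⟩ := hs
  obtain ⟨ht1, ht2⟩ := ht
  have hsε : s ∈ Ioo (-ε) ε := ⟨hs1, by linarith⟩
  have h0ε : (0:ℝ) ∈ Ioo (-ε) ε := ⟨by linarith, hε⟩
  have htε : t ∈ Ioo (-ε) ε := ⟨by linarith, ht2⟩
  set A := deriv f s with hAdef
  set B := deriv f t with hBdef
  -- slope inequalities
  have hslope1 : A < h / s := by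
    have := hconv.deriv_lt_slope hsε h0ε hs2 (hdiff s)
    rwa [show slope f s 0 = h / s by rw [slope_def_field, h0, hfs]; ring] at this
  have hslope2 : h / t < B := by
    have := hconv.slope_lt_deriv h0ε htε ht1 (hdiff t)
    rwa [show slope f 0 t = h / t by rw [slope_def_field, h0, hft]; ring] at this
  have hA0 : A < 0 := hslope1.trans (div_neg_of_pos_of_neg hh hs2)
  have hB0 : 0 < B := (div_pos hh ht1).trans hslope2
  have hsa : h < s * A := by
    have := (lt_div_iff_of_neg hs2).mp hslope1
    linarith [this]
  have htb : h < t * B := by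
    have := (div_lt_iff₀ ht1).mp hslope2
    linarith [this]
  have hD : 0 < B - A := by linarith
  have hq : 0 < -(A * B) := by nlinarith
  have hLr : 0 < t - s := by linarith
  have hA0' : A ≠ 0 := ne_of_lt hA0
  have hB0' : B ≠ 0 := ne_of_gt hB0
  have hD0' : B - A ≠ 0 := ne_of_gt hD
  have hB1 : s - h / A < 0 := by
    rw [sub_neg]
    exact (lt_div_iff_of_neg hA0).mpr (by linarith)
  have hB2 : 0 < t - h / B := by
    rw [sub_pos]
    exact (div_lt_iff₀ hB0).mpr (by linarith)
  have hbase : 0 < (t - h / B) - (s - h / A) := by linarith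
  have hPp : 0 < -(h * (B - A) + (t - s) * (A * B)) := by
    have h2 : -(h * (B - A) + (t - s) * (A * B))
        = ((t - h / B) - (s - h / A)) * (-(A * B)) := by
      field_simp
      ring
    rw [h2]
    exact mul_pos hbase hq
  have hY : h + (t - s) * A * B / (B - A) < 0 := by
    have h3 : h + (t - s) * A * B / (B - A)
        = (h * (B - A) + (t - s) * (A * B)) / (B - A) := by
      field_simp
    rw [h3]
    exact div_neg_of_neg_of_pos (by linarith) hD
  -- compute U
  have hU2 : U = (-(h + (t - s) * A * B / (B - A))) * ((t - h / B) - (s - h / A)) / 2 := by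
    rw [hU, triangle_area]
    have hexpr : ((s - h / A, (0:ℝ)).1 - ((t * B - s * A) / (B - A),
          h + (t - s) * A * B / (B - A)).1)
        * (((t - h / B, (0:ℝ)).2) - ((t * B - s * A) / (B - A),
          h + (t - s) * A * B / (B - A)).2)
        - (((t - h / B, (0:ℝ)).1) - ((t * B - s * A) / (B - A),
          h + (t - s) * A * B / (B - A)).1)
        * (((s - h / A, (0:ℝ)).2) - ((t * B - s * A) / (B - A),
          h + (t - s) * A * B / (B - A)).2)
        = (h + (t - s) * A * B / (B - A)) * ((t - h / B) - (s - h / A)) := by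
      dsimp only
      ring
    rw [hexpr, abs_of_neg (mul_neg_of_neg_of_pos hY hbase)]
    ring
  have hU3 : U = (-(h * (B - A) + (t - s) * (A * B))) ^ 2
      / (2 * ((B - A) * (-(A * B)))) := by
    rw [hU2]
    field_simp
    ring
  have hl3 : ℓ = (-(h * (B - A) + (t - s) * (A * B))) / (-(A * B)) := by
    rw [hℓ, hL]
    field_simp
    ring
  have hV3 : V = (1/2) * ((-(A * B)) / (B - A)) * (t - s) ^ 2 := by
    rw [hV, hL]
  have hT3 : T = h * (t - s) / 2 := by rw [hT, hL]
  have hP3 : -(h * (B - A) + (t - s) * (A * B))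
      = (-(A * B)) * (t - s) - h * (B - A) := by ring
  have hL3 : ℓ = L / 2 ↔ ℓ = (t - s) / 2 := by rw [hL]
  rw [hL3]
  exact key_alg h (t - s) (B - A) (-(A * B)) (-(h * (B - A) + (t - s) * (A * B)))
    U T V ℓ hh hLr hD hq hPp hP3 hU3 hT3 hV3 hl3
end
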